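/- If $T : \mathbf{C} \to \mathbf{C}$ factors as $T \cong G \circ F$ through a category $\mathbf{D}$ on which every endofunctor has an initial algebra, then for any endofunctor $H : \mathbf{C} \to \mathbf{C}$, the composite $H \circ T$ has an initial algebra. -/

import Mathlib

open CategoryTheory CategoryTheory.Limits

universe v v₂ u u₂

/-!
Rolling rule: for `P : C ⥤ D` and `Q : D ⥤ C`, applying `Q` to an initial `(Q ⋙ P)`-algebra
gives an initial `(P ⋙ Q)`-algebra. Since `T ⋙ H ≅ F ⋙ (G ⋙ H)`, it suffices to roll the
initial algebra of the endofunctor `(G ⋙ H) ⋙ F` of `D`.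
-/

namespace CategoryTheory.Endofunctor.Algebra

variable {C : Type u} [Category.{v} C] {D : Type u₂} [Category.{v₂} D]

abbrev roll {P : C ⥤ D} (Q : D ⥤ C) (A : Algebra (Q ⋙ P)) : Algebra (P ⋙ Q) where
  a := Q.obj A.a
  str := Q.map A.str

variable {P : C ⥤ D} {Q : D ⥤ C} {A : Algebra (Q ⋙ P)} {Y : Algebra (P ⋙ Q)}

def rollHom (f : A ⟶ roll P Y) : roll Q A ⟶ Y where
  f := Q.map f.f ≫ Y.str
  h := by
    have hf : P.map (Q.map f.f) ≫ P.map Y.str = A.str ≫ f.f := f.h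
    dsimp
    rw [P.map_comp, hf, Q.map_comp_assoc]

theorem map_inv_str_comp_map_comp_str [IsIso A.str] (m : roll Q A ⟶ Y) :
    Q.map (inv A.str ≫ P.map m.f) ≫ Y.str = m.f := by
  have hm : Q.map (P.map m.f) ≫ Y.str = Q.map A.str ≫ m.f := m.h
  rw [Q.map_comp_assoc, hm, ← Q.map_comp_assoc, IsIso.inv_hom_id, Q.map_id, Category.id_comp]

noncomputable def unrollHom [IsIso A.str] (m : roll Q A ⟶ Y) : A ⟶ roll P Y where
  f := inv A.str ≫ P.map m.f
  h := by
    dsimp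
    rw [← P.map_comp, map_inv_str_comp_map_comp_str, IsIso.hom_inv_id_assoc]

theorem rollHom_unrollHom [IsIso A.str] (m : roll Q A ⟶ Y) : rollHom (unrollHom m) = m :=
  Hom.ext (map_inv_str_comp_map_comp_str m)

/-- By Lambek's lemma `A.str` is invertible, so every `roll Q A ⟶ Y` is `rollHom` of some
`A ⟶ roll P Y`, of which there is only one. -/
noncomputable def isInitialRoll (hA : IsInitial A) : IsInitial (roll Q A) :=
  have := Initial.str_isIso hA
  IsInitial.ofUniqueHom (fun Y => rollHom (hA.to (roll P Y))) fun _ m => by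
    rw [← rollHom_unrollHom m, hA.hom_ext (unrollHom m) (hA.to _)]

end CategoryTheory.Endofunctor.Algebra

open Endofunctor

/-- If `T ≅ G ∘ F` factors through a category `D` on which every endofunctor has an
initial algebra, then for every endofunctor `H` on `C` the composite `H ∘ T = T ⋙ H`
has an initial algebra. -/
theorem initial_algebra_comp_of_factorisation {C : Type u} [Category.{v} C]
    {D : Type u₂} [Category.{v₂} D]
    (T : C ⥤ C) (F : C ⥤ D) (G : D ⥤ C) (i : T ≅ F ⋙ G)
    (hD : ∀ S : D ⥤ D, ∃ A : Endofunctor.Algebra S, Nonempty (IsInitial A))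
    (H : C ⥤ C) :
    ∃ A : Endofunctor.Algebra (T ⋙ H), Nonempty (IsInitial A) := by
  obtain ⟨A, ⟨hA⟩⟩ := hD ((G ⋙ H) ⋙ F)
  let e : Algebra (F ⋙ G ⋙ H) ≌ Algebra (T ⋙ H) :=
    Algebra.equivOfNatIso (Functor.isoWhiskerRight i H ≪≫ Functor.associator F G H).symm
  exact ⟨e.functor.obj (A.roll (G ⋙ H)), ⟨(Algebra.isInitialRoll hA).isInitialObj e.functor _⟩⟩
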